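/- Let D and D' be persistence diagrams and suppose there is a bijection γ : D̂ → D̂' with sup_{p∈D̂} ||p − γ(p)||_∞ < ε, where ε < δ/2 and δ = d_∞(D, Δ). Then every point of γ(D) is at ℓ∞-distance strictly greater than ε from the diagonal, and every point of D' \ γ(D) is at ℓ∞-distance strictly less than ε from the diagonal. -/
import Mathlib


/-- The ℓ∞ distance on the plane. -/
def dInfty (p q : ℝ × ℝ) : ℝ := max |p.1 - q.1| |p.2 - q.2|

/-- The ℓ∞ distance from a point to the diagonal `Δ = {(x, x)}`. -/
noncomputable def diagDist (p : ℝ × ℝ) : ℝ := sInf {r : ℝ | ∃ x : ℝ, r = dInfty p (x, x)}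

/-- The augmented diagram `D̂`: the points of the finite diagram `D` together with
countably many copies of each diagonal point `(x, x)` (the second component `ℝ × ℕ`
indexes diagonal points with infinite multiplicity).  `hatPos` gives the position in
the plane of each element of `D̂`. -/
def hatPos (D : Finset (ℝ × ℝ)) : ({ p // p ∈ D } ⊕ ℝ × ℕ) → ℝ × ℝ :=
  Sum.elim Subtype.val (fun xn => (xn.1, xn.1))

lemma diagDist_eq (p : ℝ × ℝ) : diagDist p = |p.1 - p.2| / 2 := by
  have hlb : ∀ r ∈ {r : ℝ | ∃ x : ℝ, r = dInfty p (x, x)}, |p.1 - p.2| / 2 ≤ r := by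
    rintro r ⟨x, rfl⟩
    simp only [dInfty]
    have h1 : |p.1 - x| ≤ max |p.1 - x| |p.2 - x| := le_max_left _ _
    have h2 : |p.2 - x| ≤ max |p.1 - x| |p.2 - x| := le_max_right _ _
    have h3 : |p.1 - p.2| ≤ |p.1 - x| + |p.2 - x| := by
      have := abs_sub_le p.1 x p.2
      have := abs_sub_comm x p.2
      linarith
    linarith
  apply le_antisymm
  · apply csInf_le ⟨_, hlb⟩
    refine ⟨(p.1 + p.2) / 2, ?_⟩
    simp only [dInfty]
    have h1 : |p.1 - (p.1 + p.2) / 2| = |p.1 - p.2| / 2 := by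
      rw [show p.1 - (p.1 + p.2) / 2 = (p.1 - p.2) / 2 by ring, abs_div]
      simp
    have h2 : |p.2 - (p.1 + p.2) / 2| = |p.1 - p.2| / 2 := by
      rw [show p.2 - (p.1 + p.2) / 2 = (p.2 - p.1) / 2 by ring, abs_div, abs_sub_comm]
      simp
    rw [h1, h2, max_self]
  · exact le_csInf ⟨_, ⟨0, rfl⟩⟩ hlb

/-- Let `δ = d_∞(D, Δ)` and `ε < δ/2`.  If `γ : D̂ → D̂'` is a bijection of the augmented
diagrams with `sup_{p ∈ D̂} ‖p - γ(p)‖_∞ < ε`, then every point of `γ(D)` is at ℓ∞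
distance strictly greater than `ε` from the diagonal, and every point of `D' \ γ(D)` is at
ℓ∞ distance strictly less than `ε` from the diagonal. -/
theorem stmt17 (D D' : Finset (ℝ × ℝ))
    (hD : ∀ p ∈ D, p.1 < p.2) (hD' : ∀ p ∈ D', p.1 < p.2)
    (δ ε : ℝ) (hδ : IsLeast {r : ℝ | ∃ p ∈ D, r = diagDist p} δ)
    (hε : ε < δ / 2)
    (γ : ({ p // p ∈ D } ⊕ ℝ × ℕ) ≃ ({ p // p ∈ D' } ⊕ ℝ × ℕ))
    (hγ : ∃ c : ℝ, c < ε ∧ ∀ i, dInfty (hatPos D i) (hatPos D' (γ i)) ≤ c) :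
    (∀ p : ℝ × ℝ, ∀ hp : p ∈ D, ε < diagDist (hatPos D' (γ (Sum.inl ⟨p, hp⟩)))) ∧
    (∀ q ∈ D', (∀ p : ℝ × ℝ, ∀ hp : p ∈ D, hatPos D' (γ (Sum.inl ⟨p, hp⟩)) ≠ q) →
      diagDist q < ε) := by
  obtain ⟨c, hcε, hall⟩ := hγ
  constructor
  · intro p hp
    have h1 := hall (Sum.inl ⟨p, hp⟩)
    set q := hatPos D' (γ (Sum.inl ⟨p, hp⟩)) with hq
    have hpos : hatPos D (Sum.inl ⟨p, hp⟩) = p := rfl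
    rw [hpos] at h1
    have hδp : δ ≤ diagDist p := hδ.2 ⟨p, hp, rfl⟩
    rw [diagDist_eq] at hδp ⊢
    simp only [dInfty] at h1
    have b1 : |p.1 - q.1| ≤ c := le_trans (le_max_left _ _) h1
    have b2 : |p.2 - q.2| ≤ c := le_trans (le_max_right _ _) h1
    have t : |p.1 - p.2| ≤ |q.1 - q.2| + (|p.1 - q.1| + |p.2 - q.2|) := by
      have he : p.1 - p.2 = (q.1 - q.2) + ((p.1 - q.1) - (p.2 - q.2)) := by ring
      calc |p.1 - p.2| = |(q.1 - q.2) + ((p.1 - q.1) - (p.2 - q.2))| := by rw [he]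
        _ ≤ |q.1 - q.2| + |(p.1 - q.1) - (p.2 - q.2)| := abs_add_le _ _
        _ ≤ |q.1 - q.2| + (|p.1 - q.1| + |p.2 - q.2|) := by
            gcongr; exact abs_sub _ _
    linarith
  · intro q hq hne
    rcases h : γ.symm (Sum.inl ⟨q, hq⟩) with ⟨p, hp⟩ | ⟨x, n⟩
    · exfalso
      have hγp : γ (Sum.inl ⟨p, hp⟩) = Sum.inl ⟨q, hq⟩ := by
        rw [← h, Equiv.apply_symm_apply]
      exact hne p hp (by rw [hγp]; rfl)
    · have hγx : γ (Sum.inr (x, n)) = Sum.inl ⟨q, hq⟩ := by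
        rw [← h, Equiv.apply_symm_apply]
      have h1 := hall (Sum.inr (x, n))
      rw [hγx] at h1
      simp only [hatPos, Sum.elim_inr, Sum.elim_inl, dInfty] at h1
      have b1 : |x - q.1| ≤ c := le_trans (le_max_left _ _) h1
      have b2 : |x - q.2| ≤ c := le_trans (le_max_right _ _) h1
      rw [diagDist_eq]
      have t : |q.1 - q.2| ≤ |x - q.1| + |x - q.2| := by
        have := abs_sub_le q.1 x q.2
        have := abs_sub_comm q.1 x
        linarith
      linarith
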